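/- arXiv:2506.21254 — 5 statements merged into one kernel-verified Lean document; each statement's English description precedes it below -/
import Mathlib

section
/- Let G be a finite simple graph with m edges and let W be an irregularising walk of G. Then G admits a proper labelling ℓ whose total label sum satisfies Σ_{e∈E(G)} ℓ(e) ≤ ‖W‖ + m. (Consequently, the minimum total label sum of a proper labelling of a nice graph G is at most ML^W(G) + m.) -/
/-! Label every edge by one plus the number of times `W` traverses it. The vertex sum of `u`
is then `d_G(u) + inc_W(u)`, so properness is exactly the irregularising property of `W`,
and the labels add up to `m + ‖W‖`. -/

open SimpleGraph Finset

variable {V : Type*}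

/-- `W.inc u` is the number of edge-traversals of the walk `W` incident to `u`. -/
def SimpleGraph.Walk.inc [DecidableEq V] {G : SimpleGraph V} {a b : V}
    (W : G.Walk a b) (u : V) : ℕ :=
  (W.edges.filter (fun e => u ∈ e)).length

/-- A walk `W` of `G` is irregularising if in the multigraph `G + W` no two
adjacent vertices have the same degree. -/
def SimpleGraph.Walk.Irregularising [Fintype V] [DecidableEq V] {G : SimpleGraph V}
    [DecidableRel G.Adj] {a b : V} (W : G.Walk a b) : Prop :=
  ∀ ⦃u v : V⦄, G.Adj u v → G.degree u + W.inc u ≠ G.degree v + W.inc v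

/-- The vertex sum `σ_ℓ(u)` of a labelling. -/
def vertexSum [Fintype V] [DecidableEq V] (G : SimpleGraph V) [DecidableRel G.Adj]
    (ℓ : Sym2 V → ℕ) (u : V) : ℕ :=
  ∑ w ∈ G.neighborFinset u, ℓ s(u, w)

/-- A labelling is proper if adjacent vertices get distinct sums. -/
def IsProperLabelling [Fintype V] [DecidableEq V] (G : SimpleGraph V) [DecidableRel G.Adj]
    (ℓ : Sym2 V → ℕ) : Prop :=
  ∀ ⦃u v : V⦄, G.Adj u v → vertexSum G ℓ u ≠ vertexSum G ℓ v

/-- Minimum length of an irregularising walk, as an extended natural number. -/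
noncomputable def MLW [Fintype V] [DecidableEq V] (G : SimpleGraph V) [DecidableRel G.Adj] : ℕ∞ :=
  ⨅ (a : V) (b : V) (W : G.Walk a b) (_ : W.Irregularising), (W.length : ℕ∞)

/-- Infimum over irregularising walks of the maximum number of traversals of a single edge. -/
noncomputable def MEW [Fintype V] [DecidableEq V] (G : SimpleGraph V) [DecidableRel G.Adj] : ℕ∞ :=
  ⨅ (a : V) (b : V) (W : G.Walk a b) (_ : W.Irregularising),
    ((W.edges.toFinset.sup fun e => W.edges.count e : ℕ) : ℕ∞)

/-- Infimum over irregularising walks of `max_u inc_W(u)`. -/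
noncomputable def MVW [Fintype V] [DecidableEq V] (G : SimpleGraph V) [DecidableRel G.Adj] : ℕ∞ :=
  ⨅ (a : V) (b : V) (W : G.Walk a b) (_ : W.Irregularising),
    ((Finset.univ.sup fun u => W.inc u : ℕ) : ℕ∞)

namespace SimpleGraph

variable [DecidableEq V] {G : SimpleGraph V}

theorem sum_neighborFinset_count_eq_length_filter (u : V) [Fintype (G.neighborSet u)]
    {l : List (Sym2 V)} (hl : ∀ e ∈ l, e ∈ G.edgeSet) :
    ∑ w ∈ G.neighborFinset u, l.count s(u, w) = (l.filter (fun e => u ∈ e)).length := by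
  have hcount : ∀ e ∈ (G.neighborFinset u).map (Sym2.mkEmbedding u),
      l.count e = Multiset.count e ↑(l.filter (fun e => u ∈ e)) := by
    intro e he
    obtain ⟨w, -, rfl⟩ := Finset.mem_map.mp he
    rw [Sym2.mkEmbedding_apply, ← Multiset.filter_coe,
      Multiset.count_filter_of_pos (p := fun e => u ∈ e) (Sym2.mem_mk_left u w),
      Multiset.coe_count]
  have hsupp : ∀ e ∈ (↑(l.filter (fun e => u ∈ e)) : Multiset (Sym2 V)),
      e ∈ (G.neighborFinset u).map (Sym2.mkEmbedding u) := by
    intro e he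
    obtain ⟨hel, hue⟩ := List.mem_filter.mp (Multiset.mem_coe.mp he)
    obtain ⟨w, rfl⟩ := Sym2.mem_iff_exists.mp (of_decide_eq_true hue)
    exact Finset.mem_map.mpr ⟨w, (G.mem_neighborFinset u w).mpr (hl _ hel), rfl⟩
  calc ∑ w ∈ G.neighborFinset u, l.count s(u, w)
      = ∑ e ∈ (G.neighborFinset u).map (Sym2.mkEmbedding u), l.count e :=
        (Finset.sum_map _ (Sym2.mkEmbedding u) (fun e => l.count e)).symm
    _ = ∑ e ∈ (G.neighborFinset u).map (Sym2.mkEmbedding u),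
          Multiset.count e ↑(l.filter (fun e => u ∈ e)) := Finset.sum_congr rfl hcount
    _ = (l.filter (fun e => u ∈ e)).length := by
        rw [Multiset.sum_count_eq_card hsupp, Multiset.coe_card]

namespace Walk

variable {a b : V}

def traversalLabelling (W : G.Walk a b) (e : Sym2 V) : ℕ :=
  1 + W.edges.count e

theorem vertexSum_traversalLabelling [Fintype V] [DecidableRel G.Adj] (W : G.Walk a b) (u : V) :
    vertexSum G W.traversalLabelling u = G.degree u + W.inc u := by
  simp only [vertexSum, traversalLabelling]
  rw [Finset.sum_add_distrib, Finset.sum_const, smul_eq_mul,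
    mul_one, card_neighborFinset_eq_degree,
    sum_neighborFinset_count_eq_length_filter u (fun _ he => W.edges_subset_edgeSet he), inc]

theorem sum_edgeFinset_traversalLabelling [Fintype G.edgeSet] (W : G.Walk a b) :
    ∑ e ∈ G.edgeFinset, W.traversalLabelling e = #G.edgeFinset + W.length := by
  have hsupp : ∀ e ∈ (W.edges : Multiset (Sym2 V)), e ∈ G.edgeFinset := fun e he =>
    G.mem_edgeFinset.mpr (W.edges_subset_edgeSet (Multiset.mem_coe.mp he))
  unfold traversalLabelling
  rw [Finset.sum_add_distrib, Finset.sum_const, smul_eq_mul, mul_one, ← W.length_edges,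
    ← Multiset.coe_card, ← Multiset.sum_count_eq_card hsupp]
  simp only [Multiset.coe_count]

end Walk

end SimpleGraph

/-- If `W` is an irregularising walk of a finite simple graph `G` with
`m` edges, then `G` admits a proper labelling whose total label sum is at most
`‖W‖ + m`. -/
theorem stmt_0 {V : Type*} [Fintype V] [DecidableEq V] (G : SimpleGraph V)
    [DecidableRel G.Adj] {a b : V} (W : G.Walk a b) (hW : W.Irregularising) :
    ∃ ℓ : Sym2 V → ℕ, (∀ e ∈ G.edgeSet, 1 ≤ ℓ e) ∧ IsProperLabelling G ℓ ∧
      ∑ e ∈ G.edgeFinset, ℓ e ≤ W.length + G.edgeFinset.card := by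
  refine ⟨W.traversalLabelling, fun _ _ => Nat.le_add_right 1 _, fun u v huv => ?_, ?_⟩
  · rw [W.vertexSum_traversalLabelling, W.vertexSum_traversalLabelling]
    exact hW huv
  · rw [W.sum_edgeFinset_traversalLabelling, add_comm]
end

section
/- Let G be a nice graph with n vertices, m edges, and maximum degree Δ. Then: ME^W(G) ≤ ML^W(G) ≤ m·ME^W(G); MV^W(G) ≤ ML^W(G); 2·ML^W(G) ≤ n·MV^W(G); and ME^W(G) ≤ MV^W(G) ≤ Δ·ME^W(G). -/
open SimpleGraph Finset

variable {V : Type*}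

/-!
Every inequality already holds walk by walk: a walk uses at most `m` distinct edges and meets
at most `Δ` distinct edges at a vertex, each traversed at most `ME` times, and
`∑ u, inc_W(u) = 2‖W‖`. It passes to the infima by evaluating at a walk attaining the
right-hand infimum. When no irregularising walk exists both sides are `⊤`, so the factors
`m`, `n`, `Δ` must be nonzero; they are, since on a nonempty vertex set an edgeless graph is
irregularised by the trivial walk.
-/

theorem List.length_le_card_toFinset_mul_sup_count {α : Type*} [DecidableEq α] (l : List α) :
    l.length ≤ #l.toFinset * l.toFinset.sup l.count :=
  calc l.length = ∑ e ∈ l.toFinset, l.count e := l.sum_toFinset_count_eq_length.symm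
    _ ≤ #l.toFinset • l.toFinset.sup l.count :=
      Finset.sum_le_card_nsmul _ _ _ fun _ he => Finset.le_sup (f := fun a => l.count a) he

theorem ENat.mul_iInf_le_mul_iInf {ι : Sort*} {f g : ι → ℕ∞} {c d : ℕ∞}
    (hc : c = 0 → Nonempty ι) (h : ∀ i, d * f i ≤ c * g i) :
    d * ⨅ i, f i ≤ c * ⨅ i, g i := by
  rw [ENat.mul_iInf' (f := g) hc]
  exact le_iInf fun i => (mul_le_mul_right (iInf_le f i) d).trans (h i)

theorem ENat.iInf_le_mul_iInf {ι : Sort*} {f g : ι → ℕ∞} {c : ℕ∞}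
    (hc : c = 0 → Nonempty ι) (h : ∀ i, f i ≤ c * g i) : ⨅ i, f i ≤ c * ⨅ i, g i := by
  simpa using ENat.mul_iInf_le_mul_iInf (d := 1) hc (by simpa using h)

namespace SimpleGraph

namespace Walk

variable [DecidableEq V] {G : SimpleGraph V} {a b : V}

def maxEdgeCount (W : G.Walk a b) : ℕ := W.edges.toFinset.sup W.edges.count

def maxInc [Fintype V] (W : G.Walk a b) : ℕ := univ.sup W.inc

theorem inc_cons {c : V} (h : G.Adj a b) (W : G.Walk b c) (u : V) :
    (cons h W).inc u = (if u ∈ s(a, b) then 1 else 0) + W.inc u := by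
  simp only [inc, edges_cons, List.filter_cons]
  split_ifs <;> simp_all [add_comm]

theorem sum_inc [Fintype V] (W : G.Walk a b) : ∑ u, W.inc u = 2 * W.length := by
  induction W with
  | nil => simp [inc]
  | @cons x y _ h W ih =>
    have hxy : ∑ u : V, (if u ∈ s(x, y) then 1 else 0) = 2 := by
      rw [Finset.sum_boole, Nat.cast_id, ← Sym2.card_toFinset_of_not_isDiag s(x, y) h.ne]
      congr 1; ext; simp
    simp only [inc_cons, Finset.sum_add_distrib, hxy, ih, length_cons]
    ring

theorem inc_le_length (W : G.Walk a b) (u : V) : W.inc u ≤ W.length :=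
  W.length_edges ▸ List.length_filter_le _ _

theorem count_edges_le_inc (W : G.Walk a b) {u v : V} : W.edges.count s(u, v) ≤ W.inc u := by
  rw [inc, List.count, ← List.countP_eq_length_filter]
  refine List.countP_mono_left fun e _ he => ?_
  simp only [beq_iff_eq] at he
  simp [he]

theorem maxEdgeCount_le_length (W : G.Walk a b) : W.maxEdgeCount ≤ W.length :=
  Finset.sup_le fun _ _ => W.length_edges ▸ List.count_le_length

theorem length_le_card_edgeFinset_mul_maxEdgeCount [Fintype G.edgeSet] (W : G.Walk a b) :
    W.length ≤ #G.edgeFinset * W.maxEdgeCount := by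
  have hsub : W.edges.toFinset ⊆ G.edgeFinset := fun e he =>
    mem_edgeFinset.mpr (W.edges_subset_edgeSet (List.mem_toFinset.mp he))
  calc W.length ≤ #W.edges.toFinset * W.maxEdgeCount :=
        W.length_edges ▸ W.edges.length_le_card_toFinset_mul_sup_count
    _ ≤ #G.edgeFinset * W.maxEdgeCount := Nat.mul_le_mul_right _ (card_le_card hsub)

variable [Fintype V]

theorem maxInc_le_length (W : G.Walk a b) : W.maxInc ≤ W.length :=
  Finset.sup_le fun u _ => W.inc_le_length u

theorem two_mul_length_le_card_mul_maxInc (W : G.Walk a b) :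
    2 * W.length ≤ Fintype.card V * W.maxInc := by
  rw [← sum_inc, ← card_univ, ← smul_eq_mul]
  exact Finset.sum_le_card_nsmul _ _ _ fun u _ => le_sup (mem_univ u)

theorem maxEdgeCount_le_maxInc (W : G.Walk a b) : W.maxEdgeCount ≤ W.maxInc := by
  refine Finset.sup_le fun e _ => ?_
  induction e with
  | _ u v => exact W.count_edges_le_inc.trans (le_sup (f := W.inc) (mem_univ u))

theorem inc_le_degree_mul_maxEdgeCount [DecidableRel G.Adj] (W : G.Walk a b) (u : V) :
    W.inc u ≤ G.degree u * W.maxEdgeCount := by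
  set l := W.edges.filter (u ∈ ·)
  have hsub : l.toFinset ⊆ G.incidenceFinset u := fun e he => by
    obtain ⟨he, hu⟩ := List.mem_filter.mp (List.mem_toFinset.mp he)
    exact (mem_incidenceFinset _ _ _).mpr ⟨W.edges_subset_edgeSet he, by simpa using hu⟩
  have hcount : l.toFinset.sup l.count ≤ W.maxEdgeCount := Finset.sup_le fun e he =>
    have he : e ∈ W.edges := List.mem_of_mem_filter (List.mem_toFinset.mp he)
    (List.filter_sublist.count_le e).trans
      (le_sup (f := fun a => W.edges.count a) (List.mem_toFinset.mpr he))
  calc W.inc u = l.length := rfl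
    _ ≤ #l.toFinset * l.toFinset.sup l.count := l.length_le_card_toFinset_mul_sup_count
    _ ≤ G.degree u * W.maxEdgeCount := by
      rw [← card_incidenceFinset_eq_degree]
      exact Nat.mul_le_mul (card_le_card hsub) hcount

theorem maxInc_le_maxDegree_mul_maxEdgeCount [DecidableRel G.Adj] (W : G.Walk a b) :
    W.maxInc ≤ G.maxDegree * W.maxEdgeCount :=
  Finset.sup_le fun u _ => (W.inc_le_degree_mul_maxEdgeCount u).trans
    (Nat.mul_le_mul_right _ (G.degree_le_maxDegree u))

end Walk

variable [Fintype V] [DecidableEq V] {G : SimpleGraph V} [DecidableRel G.Adj]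

variable (G) in
structure IrregularisingWalk where
  {start finish : V}
  walk : G.Walk start finish
  irregularising : walk.Irregularising

theorem iInf_irregularising_eq (F : ∀ {a b : V}, G.Walk a b → ℕ∞) :
    ⨅ (a : V) (b : V) (W : G.Walk a b) (_ : W.Irregularising), F W =
      ⨅ p : G.IrregularisingWalk, F p.walk :=
  le_antisymm
    (le_iInf fun p => iInf₂_le_of_le p.start p.finish <| iInf₂_le p.walk p.irregularising)
    (le_iInf₂ fun _ _ => le_iInf₂ fun W hW => iInf_le_of_le ⟨W, hW⟩ le_rfl)

theorem nonempty_irregularisingWalk_of_eq_bot [Nonempty V] (h : G = ⊥) :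
    Nonempty G.IrregularisingWalk :=
  ⟨⟨.nil (u := Classical.arbitrary V), fun u v huv => by simp [h] at huv⟩⟩

end SimpleGraph

theorem stmt_3_general {V : Type*} [Fintype V] [DecidableEq V] (G : SimpleGraph V)
    [DecidableRel G.Adj] (hconn : G.Connected) :
    MEW G ≤ MLW G ∧ MLW G ≤ (G.edgeFinset.card : ℕ∞) * MEW G ∧
    MVW G ≤ MLW G ∧ 2 * MLW G ≤ (Fintype.card V : ℕ∞) * MVW G ∧
    MEW G ≤ MVW G ∧ MVW G ≤ (G.maxDegree : ℕ∞) * MEW G := by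
  have := hconn.nonempty
  have hm (h : (#G.edgeFinset : ℕ∞) = 0) : Nonempty G.IrregularisingWalk :=
    nonempty_irregularisingWalk_of_eq_bot
      (edgeFinset_eq_empty.mp (card_eq_zero.mp (by exact_mod_cast h)))
  have hn (h : (Fintype.card V : ℕ∞) = 0) : Nonempty G.IrregularisingWalk :=
    absurd (by exact_mod_cast h) Fintype.card_ne_zero
  have hΔ (h : (G.maxDegree : ℕ∞) = 0) : Nonempty G.IrregularisingWalk :=
    nonempty_irregularisingWalk_of_eq_bot (maxDegree_eq_zero_iff.mp (by exact_mod_cast h))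
  rw [MLW, MEW, MVW, iInf_irregularising_eq, iInf_irregularising_eq, iInf_irregularising_eq]
  refine ⟨iInf_mono fun p => ?_, ENat.iInf_le_mul_iInf hm fun p => ?_, iInf_mono fun p => ?_,
    ENat.mul_iInf_le_mul_iInf hn fun p => ?_, iInf_mono fun p => ?_,
    ENat.iInf_le_mul_iInf hΔ fun p => ?_⟩
  · exact_mod_cast p.walk.maxEdgeCount_le_length
  · exact_mod_cast p.walk.length_le_card_edgeFinset_mul_maxEdgeCount
  · exact_mod_cast p.walk.maxInc_le_length
  · exact_mod_cast p.walk.two_mul_length_le_card_mul_maxInc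
  · exact_mod_cast p.walk.maxEdgeCount_le_maxInc
  · exact_mod_cast p.walk.maxInc_le_maxDegree_mul_maxEdgeCount

/-- relationships between the irregularising walk parameters for a nice graph
`G` with `n` vertices, `m` edges and maximum degree `Δ`:
`ME ≤ ML ≤ m·ME`, `MV ≤ ML`, `2·ML ≤ n·MV`, and `ME ≤ MV ≤ Δ·ME`. -/
theorem stmt_3 {V : Type*} [Fintype V] [DecidableEq V] (G : SimpleGraph V)
    [DecidableRel G.Adj] (hconn : G.Connected)
    (hK2 : ¬ Nonempty (G ≃g (⊤ : SimpleGraph (Fin 2)))) :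
    MEW G ≤ MLW G ∧ MLW G ≤ (G.edgeFinset.card : ℕ∞) * MEW G ∧
    MVW G ≤ MLW G ∧ 2 * MLW G ≤ (Fintype.card V : ℕ∞) * MVW G ∧
    MEW G ≤ MVW G ∧ MVW G ≤ (G.maxDegree : ℕ∞) * MEW G :=
  stmt_3_general G hconn
end

section
/- Let G be a nice graph with m edges and maximum degree Δ, and let x be the minimum of Σ_{e∈E(G)} ℓ(e) over all proper labellings ℓ of G. Then x ≤ ML^W(G) + m and ML^W(G) + m ≤ 3(m + Δ·x). -/
open SimpleGraph Finset

variable {V : Type*}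

/-! An irregularising walk `W` yields the proper labelling `e ↦ 1 + (number of traversals of e
by W)`: its vertex sums are exactly the degrees in `G + W`, and its total is `m + ‖W‖`.
Conversely, from a proper labelling `ℓ` of total `x`, splicing back-and-forth detours into a
closed walk one new edge at a time (possible by connectivity) gives a closed walk crossing every
edge `e` exactly `2Δ·ℓ(e)` times. Then `inc_W(u) = 2Δ·σ_ℓ(u)`; as degrees lie in `[1, Δ]` they
cannot compensate a difference of at least `2Δ`, so the walk is irregularising, of length `2Δx`.
-/

theorem Nat.add_mul_ne_add_mul {a b k s t : ℕ} (ha : 1 ≤ a) (hb : 1 ≤ b) (hak : a ≤ k)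
    (hbk : b ≤ k) (hst : s ≠ t) : a + k * s ≠ b + k * t := by
  intro h
  rcases hst.lt_or_gt with hlt | hlt <;> nlinarith

namespace SimpleGraph

variable {G : SimpleGraph V}

def Walk.bounce {u v : V} (h : G.Adj u v) : ℕ → G.Walk u u
  | 0 => nil
  | j + 1 => cons h (cons h.symm (bounce h j))

theorem Walk.edges_bounce {u v : V} (h : G.Adj u v) (j : ℕ) :
    (bounce h j).edges = List.replicate (2 * j) s(u, v) := by
  induction j with
  | zero => rfl
  | succ j ih =>
    change s(u, v) :: s(v, u) :: (bounce h j).edges = _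
    rw [Sym2.eq_swap (a := v), ih, Nat.mul_succ, List.replicate_succ, List.replicate_succ]

theorem Walk.exists_adj_mem_support_notMem (hconn : G.Connected) {r t : V} (W : G.Walk r t)
    {S : Set (Sym2 V)} (hS : ∀ e ∈ S, e ∈ W.edges) (hSE : ¬ G.edgeSet ⊆ S) :
    ∃ u v, G.Adj u v ∧ u ∈ W.support ∧ s(u, v) ∉ S := by
  obtain ⟨f, hfE, hfS⟩ := Set.not_subset.mp hSE
  induction f using Sym2.ind with | _ a b => ?_
  by_cases ha : a ∈ W.support
  · exact ⟨a, b, hfE, ha, hfS⟩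
  obtain ⟨P⟩ := hconn r a
  obtain ⟨d, -, hd, hd'⟩ :=
    P.exists_boundary_dart {x | x ∈ W.support} W.start_mem_support ha
  exact ⟨d.fst, d.snd, d.adj, hd, fun h => hd' (W.snd_mem_support_of_mem_edges (hS _ h))⟩

variable [DecidableEq V]

theorem Walk.exists_count_edges_eq_add {r u : V} (W : G.Walk r r) (hu : u ∈ W.support)
    (C : G.Walk u u) :
    ∃ W' : G.Walk u u, ∀ e, W'.edges.count e = W.edges.count e + C.edges.count e :=
  ⟨(W.rotate u hu).append C, fun e => by
    rw [edges_append, List.count_append, (W.rotate_edges u hu).perm.count_eq]⟩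

theorem exists_closed_walk_count_edges_insert (hconn : G.Connected) {M : Sym2 V → ℕ}
    {S : Set (Sym2 V)} [DecidablePred (· ∈ S)] (hM : ∀ e ∈ S, 0 < M e) (hSE : ¬ G.edgeSet ⊆ S)
    {r : V} (W : G.Walk r r) (hW : ∀ e, W.edges.count e = if e ∈ S then 2 * M e else 0) :
    ∃ f ∈ G.edgeSet, f ∉ S ∧ ∃ (r' : V) (W' : G.Walk r' r'),
      ∀ e, W'.edges.count e = if e = f ∨ e ∈ S then 2 * M e else 0 := by
  have hSW : ∀ e ∈ S, e ∈ W.edges := fun e he =>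
    List.count_pos_iff.mp (by rw [hW, if_pos he]; exact Nat.mul_pos two_pos (hM e he))
  obtain ⟨u, v, huv, hu, hS⟩ := W.exists_adj_mem_support_notMem hconn hSW hSE
  obtain ⟨W', hW'⟩ := W.exists_count_edges_eq_add hu (Walk.bounce huv (M s(u, v)))
  refine ⟨s(u, v), huv, hS, u, W', fun e => ?_⟩
  rw [hW', hW, Walk.edges_bounce, List.count_replicate]
  by_cases he : e = s(u, v)
  · subst he
    simp [hS]
  · simp [he, Ne.symm he]

theorem exists_closed_walk_count_edges_eq [Fintype V] [DecidableRel G.Adj]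
    (hconn : G.Connected) (M : Sym2 V → ℕ) (hM : ∀ e ∈ G.edgeSet, 0 < M e) :
    ∃ (r : V) (W : G.Walk r r), ∀ e ∈ G.edgeSet, W.edges.count e = 2 * M e := by
  suffices h : ∀ n ≤ #G.edgeFinset, ∃ S ⊆ G.edgeFinset, #S = n ∧ ∃ (r : V) (W : G.Walk r r),
      ∀ e, W.edges.count e = if e ∈ S then 2 * M e else 0 by
    obtain ⟨S, hSE, hcard, r, W, hW⟩ := h _ le_rfl
    obtain rfl := Finset.eq_of_subset_of_card_le hSE hcard.ge
    exact ⟨r, W, fun e he => by rw [hW, if_pos (mem_edgeFinset.mpr he)]⟩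
  intro n
  induction n with
  | zero =>
    intro _
    exact ⟨∅, Finset.empty_subset _, rfl, hconn.nonempty.some, Walk.nil, fun _ => rfl⟩
  | succ n ih =>
    intro hn
    obtain ⟨S, hSE, rfl, r, W, hW⟩ := ih (by omega)
    have hSE' : ¬ G.edgeSet ⊆ (S : Set (Sym2 V)) := fun h =>
      (Finset.card_le_card (fun e he => h (mem_edgeFinset.mp he))).not_gt hn
    obtain ⟨f, hf, hfS, r', W', hW'⟩ := exists_closed_walk_count_edges_insert hconn
      (fun e he => hM e (mem_edgeFinset.mp (hSE he))) hSE' W (by simpa using hW)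
    refine ⟨insert f S, Finset.insert_subset (mem_edgeFinset.mpr hf) hSE,
      Finset.card_insert_of_notMem hfS, r', W', fun e => by simpa using hW' e⟩

section Finite

variable [Fintype V] [DecidableRel G.Adj]

theorem Walk.inc_eq_sum_count {a b : V} (W : G.Walk a b) (u : V) :
    W.inc u = ∑ w ∈ G.neighborFinset u, W.edges.count s(u, w) := by
  have hinj : Set.InjOn (s(u, ·)) (G.neighborFinset u) := fun _ _ _ _ h => Sym2.congr_right.mp h
  have hsub : ∀ e ∈ (W.edges.filter (u ∈ ·) : Multiset (Sym2 V)),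
      e ∈ (G.neighborFinset u).image (s(u, ·)) := by
    intro e he
    rw [Multiset.mem_coe, List.mem_filter, decide_eq_true_eq] at he
    obtain ⟨w, rfl⟩ := Sym2.mem_iff_exists.mp he.2
    exact Finset.mem_image_of_mem _ ((mem_neighborFinset G u w).mpr (W.edges_subset_edgeSet he.1))
  rw [Walk.inc, ← Multiset.coe_card, ← Multiset.sum_count_eq_card hsub, Finset.sum_image hinj]
  refine Finset.sum_congr rfl fun w _ => ?_
  simp [List.count_filter]

theorem Walk.sum_count_edges {a b : V} (W : G.Walk a b) :
    ∑ e ∈ G.edgeFinset, W.edges.count e = W.length := by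
  rw [← W.length_edges, ← Multiset.coe_card, ← Multiset.sum_count_eq_card (s := G.edgeFinset)]
  · simp only [Multiset.coe_count]
  · intro e he
    exact mem_edgeFinset.mpr (W.edges_subset_edgeSet he)

theorem vertexSum_one_add_count_edges {a b : V} (W : G.Walk a b) (u : V) :
    vertexSum G (fun e => 1 + W.edges.count e) u = G.degree u + W.inc u := by
  rw [vertexSum, Finset.sum_add_distrib, W.inc_eq_sum_count, Finset.sum_const, smul_eq_mul,
    mul_one, card_neighborFinset_eq_degree]

theorem Walk.Irregularising.isProperLabelling_one_add_count {a b : V} {W : G.Walk a b}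
    (hW : W.Irregularising) : IsProperLabelling G (fun e => 1 + W.edges.count e) := by
  intro u v huv
  rw [vertexSum_one_add_count_edges, vertexSum_one_add_count_edges]
  exact hW huv

theorem Walk.sum_one_add_count_edges {a b : V} (W : G.Walk a b) :
    ∑ e ∈ G.edgeFinset, (1 + W.edges.count e) = #G.edgeFinset + W.length := by
  rw [Finset.sum_add_distrib, W.sum_count_edges, Finset.sum_const, smul_eq_mul, mul_one]

theorem Walk.irregularising_of_inc_eq_mul {a b : V} (W : G.Walk a b) {ℓ : Sym2 V → ℕ}
    (hℓ : IsProperLabelling G ℓ) {k : ℕ} (hk : G.maxDegree ≤ k)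
    (hinc : ∀ u, W.inc u = k * vertexSum G ℓ u) : W.Irregularising := by
  intro u v huv
  rw [hinc, hinc]
  exact Nat.add_mul_ne_add_mul (G.degree_pos_iff_exists_adj u |>.mpr ⟨v, huv⟩)
    (G.degree_pos_iff_exists_adj v |>.mpr ⟨u, huv.symm⟩)
    ((G.degree_le_maxDegree u).trans hk) ((G.degree_le_maxDegree v).trans hk) (hℓ huv)

theorem MLW_le {a b : V} (W : G.Walk a b) (hW : W.Irregularising) : MLW G ≤ W.length :=
  iInf_le_of_le a <| iInf_le_of_le b <| iInf₂_le W hW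

theorem le_MLW {c : ℕ∞} (h : ∀ (a b : V) (W : G.Walk a b), W.Irregularising → c ≤ W.length) :
    c ≤ MLW G :=
  le_iInf fun a => le_iInf fun b => le_iInf₂ fun W hW => h a b W hW

theorem MLW_le_of_isProperLabelling (hconn : G.Connected) {ℓ : Sym2 V → ℕ}
    (hpos : ∀ e ∈ G.edgeSet, 1 ≤ ℓ e) (hℓ : IsProperLabelling G ℓ) :
    MLW G ≤ 2 * G.maxDegree * ∑ e ∈ G.edgeFinset, ℓ e := by
  have hM : ∀ e ∈ G.edgeSet, 0 < G.maxDegree * ℓ e := by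
    intro e he
    induction e using Sym2.ind with | _ u v => ?_
    exact Nat.mul_pos ((G.degree_pos_iff_exists_adj u).mpr ⟨v, he⟩ |>.trans_le
      (G.degree_le_maxDegree u)) (hpos _ he)
  obtain ⟨r, W, hW⟩ := exists_closed_walk_count_edges_eq hconn _ hM
  have hinc : ∀ u, W.inc u = 2 * G.maxDegree * vertexSum G ℓ u := fun u => by
    rw [W.inc_eq_sum_count, vertexSum, Finset.mul_sum]
    refine Finset.sum_congr rfl fun w hw => ?_
    rw [hW _ ((mem_neighborFinset G u w).mp hw), mul_assoc]
  have hlen : W.length = 2 * G.maxDegree * ∑ e ∈ G.edgeFinset, ℓ e := by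
    rw [← W.sum_count_edges, Finset.mul_sum]
    refine Finset.sum_congr rfl fun e he => ?_
    rw [hW e (mem_edgeFinset.mp he), mul_assoc]
  calc MLW G ≤ W.length := MLW_le W (W.irregularising_of_inc_eq_mul hℓ (by omega) hinc)
    _ = 2 * G.maxDegree * ∑ e ∈ G.edgeFinset, ℓ e := by rw [hlen]; push_cast; rfl

end Finite

end SimpleGraph

theorem stmt_6_general {V : Type*} [Fintype V] [DecidableEq V] (G : SimpleGraph V)
    [DecidableRel G.Adj] (hconn : G.Connected)
    (x : ℕ)
    (hx : IsLeast {s : ℕ | ∃ ℓ : Sym2 V → ℕ, (∀ e ∈ G.edgeSet, 1 ≤ ℓ e) ∧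
      IsProperLabelling G ℓ ∧ ∑ e ∈ G.edgeFinset, ℓ e = s} x) :
    (x : ℕ∞) ≤ MLW G + (G.edgeFinset.card : ℕ∞) ∧
      MLW G + (G.edgeFinset.card : ℕ∞) ≤
        3 * ((G.edgeFinset.card : ℕ∞) + (G.maxDegree : ℕ∞) * (x : ℕ∞)) := by
  obtain ⟨⟨ℓ, hpos, hℓ, hsum⟩, hleast⟩ := hx
  constructor
  · rw [← tsub_le_iff_right]
    refine le_MLW fun a b W hW => tsub_le_iff_right.mpr ?_
    have hxW : x ≤ #G.edgeFinset + W.length := hleast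
      ⟨_, fun _ _ => Nat.le_add_right 1 _, hW.isProperLabelling_one_add_count,
        W.sum_one_add_count_edges⟩
    rw [add_comm]
    exact_mod_cast hxW
  · calc MLW G + #G.edgeFinset ≤ 2 * G.maxDegree * x + #G.edgeFinset := by
          gcongr
          exact hsum ▸ MLW_le_of_isProperLabelling hconn hpos hℓ
      _ ≤ 3 * (#G.edgeFinset + G.maxDegree * x) := by
          norm_cast
          rw [mul_assoc]
          omega

/-- If `G` is a nice graph with `m` edges and maximum degree `Δ`, and `x`
is the minimum total label sum over proper labellings of `G`, then
`x ≤ ML^W(G) + m` and `ML^W(G) + m ≤ 3(m + Δ·x)`. -/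
theorem stmt_6 {V : Type*} [Fintype V] [DecidableEq V] (G : SimpleGraph V)
    [DecidableRel G.Adj] (hconn : G.Connected)
    (hK2 : ¬ Nonempty (G ≃g (⊤ : SimpleGraph (Fin 2))))
    (x : ℕ)
    (hx : IsLeast {s : ℕ | ∃ ℓ : Sym2 V → ℕ, (∀ e ∈ G.edgeSet, 1 ≤ ℓ e) ∧
      IsProperLabelling G ℓ ∧ ∑ e ∈ G.edgeFinset, ℓ e = s} x) :
    (x : ℕ∞) ≤ MLW G + (G.edgeFinset.card : ℕ∞) ∧
      MLW G + (G.edgeFinset.card : ℕ∞) ≤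
        3 * ((G.edgeFinset.card : ℕ∞) + (G.maxDegree : ℕ∞) * (x : ℕ∞)) :=
  stmt_6_general G hconn x hx
end

section
/- For every n ≥ 2, the minimum cardinality φ(P_n) of an irregularising multiset of edges of the path P_n equals: n/2 if n ≡ 0 (mod 4); n/2 − 1 if n ≡ 2 (mod 4); and (n − 1)/2 if n is odd. That is, P_n admits an irregularising multiset of edges of that cardinality, and every irregularising multiset of edges of P_n has at least that cardinality. -/
open SimpleGraph

instance {n : ℕ} : DecidableRel (pathGraph n).Adj := fun _ _ =>
  decidable_of_iff _ pathGraph_adj.symm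

/-- `incM F u` is the number of elements of the multiset of edges `F` incident to `u`,
counted with multiplicity. -/
def incM {V : Type*} [DecidableEq V] (F : Multiset (Sym2 V)) (u : V) : ℕ :=
  Multiset.countP (fun e => u ∈ e) F

/-- A multiset `F` of edges of `G` is irregularising if in the multigraph `G + F` no two
adjacent vertices have the same degree. -/
def IrregularisingM {V : Type*} [Fintype V] [DecidableEq V] (G : SimpleGraph V)
    [DecidableRel G.Adj] (F : Multiset (Sym2 V)) : Prop :=
  (∀ e ∈ F, e ∈ G.edgeSet) ∧
    ∀ ⦃u v : V⦄, G.Adj u v → G.degree u + incM F u ≠ G.degree v + incM F v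

/-
Writing `x j` for the multiplicity of the edge `u_j u_{j+1}` in `F`, the degree of an inner vertex
`u_k` in `P_n + F` is `2 + x (k-1) + x k`, and that of a leaf is `1 + x 0` resp. `1 + x (n-1)`. The
shared term `x k` cancels on the edge `u_k u_{k+1}`, so for `n ≥ 2` the multiset `F` is
irregularising exactly when `x j ≠ x (j + 2)` for all `j + 2 < n` (an edge at a leaf is always fine,
the leaf being the lighter end). Hence in each block `4i, …, 4i+3` of indices one of `x (4i)`,
`x (4i+2)` and one of `x (4i+1)`, `x (4i+3)` is nonzero, which gives the lower bound, and the
sequence `j % 4 / 2 = 0, 0, 1, 1, 0, 0, 1, 1, …` attains it.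
-/

open Finset

section Multigraph

variable {V : Type*} [Fintype V] [DecidableEq V] {G : SimpleGraph V} [DecidableRel G.Adj]
  {F : Multiset (Sym2 V)}

theorem incM_eq_sum_neighborFinset (hF : ∀ e ∈ F, e ∈ G.edgeSet) (v : V) :
    incM F v = ∑ w ∈ G.neighborFinset v, F.count s(v, w) := by
  have hinj : Set.InjOn (fun w => s(v, w)) (G.neighborFinset v) :=
    fun _ _ _ _ h => Sym2.congr_right.mp h
  have hsupp : ∀ e ∈ F.filter (v ∈ ·), e ∈ (G.neighborFinset v).image (fun w => s(v, w)) := by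
    intro e he
    obtain ⟨heF, hve⟩ := Multiset.mem_filter.mp he
    obtain ⟨w, rfl⟩ := Sym2.mem_iff_exists.mp hve
    exact mem_image_of_mem _ ((mem_neighborFinset G v w).mpr (hF _ heF))
  rw [incM, Multiset.countP_eq_card_filter, ← Multiset.sum_count_eq_card hsupp, sum_image hinj]
  exact sum_congr rfl fun w _ => Multiset.count_filter_of_pos (Sym2.mem_mk_left v w)

theorem degree_add_incM (hF : ∀ e ∈ F, e ∈ G.edgeSet) (v : V) :
    G.degree v + incM F v = ∑ w ∈ G.neighborFinset v, (F.count s(v, w) + 1) := by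
  rw [incM_eq_sum_neighborFinset hF, sum_add_distrib, ← card_eq_sum_ones,
    card_neighborFinset_eq_degree, add_comm]

end Multigraph

section PathGraph

open Fin.NatCast

variable {n : ℕ} {F : Multiset (Sym2 (Fin (n + 1)))}

/-- The edge `u_j u_{j+1}` of `P_n`. The cast `ℕ → Fin (n + 1)` wraps around, so only `j < n`
gives an edge. -/
def pathEdge (n j : ℕ) : Sym2 (Fin (n + 1)) :=
  s((j : Fin (n + 1)), ((j + 1 : ℕ) : Fin (n + 1)))

theorem pathEdge_injOn : Set.InjOn (pathEdge n) (Set.Iio n) := by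
  intro i hi j hj h
  simp only [Set.mem_Iio] at hi hj
  simp (disch := omega) only [pathEdge, Sym2.eq_iff, Fin.ext_iff, Fin.val_cast_of_lt] at h
  omega

theorem mem_edgeSet_pathGraph {e : Sym2 (Fin (n + 1))} :
    e ∈ (pathGraph (n + 1)).edgeSet ↔ ∃ j < n, pathEdge n j = e := by
  induction e using Sym2.ind with
  | _ u v =>
    rw [mem_edgeSet, pathGraph_adj]
    constructor
    · rintro (h | h)
      · exact ⟨u, by omega, by rw [pathEdge, h, Fin.cast_val_eq_self, Fin.cast_val_eq_self]⟩
      · exact ⟨v, by omega, by rw [pathEdge, h, Fin.cast_val_eq_self, Fin.cast_val_eq_self,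
          Sym2.eq_swap]⟩
    · rintro ⟨j, hj, h⟩
      rcases Sym2.eq_iff.mp h with ⟨rfl, rfl⟩ | ⟨rfl, rfl⟩ <;>
        simp (disch := omega) only [Fin.val_cast_of_lt] <;> simp

theorem neighborFinset_pathGraph (v : Fin (n + 1)) :
    (pathGraph (n + 1)).neighborFinset v =
      (if 0 < v.val then {((v.val - 1 : ℕ) : Fin (n + 1))} else ∅) ∪
        (if v.val < n then {((v.val + 1 : ℕ) : Fin (n + 1))} else ∅) := by
  ext w
  have hv := v.isLt
  have hw := w.isLt
  simp only [mem_neighborFinset, pathGraph_adj, mem_union]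
  split_ifs <;>
    simp (disch := omega) only [mem_singleton, notMem_empty, Fin.ext_iff, Fin.val_cast_of_lt] <;>
    grind

theorem degree_add_incM_pathGraph (hF : ∀ e ∈ F, e ∈ (pathGraph (n + 1)).edgeSet)
    (v : Fin (n + 1)) :
    (pathGraph (n + 1)).degree v + incM F v =
      (if 0 < v.val then F.count (pathEdge n (v.val - 1)) + 1 else 0) +
        (if v.val < n then F.count (pathEdge n v.val) + 1 else 0) := by
  have hv := v.isLt
  have hdisj : Disjoint (if 0 < v.val then {((v.val - 1 : ℕ) : Fin (n + 1))} else ∅ : Finset _)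
      (if v.val < n then {((v.val + 1 : ℕ) : Fin (n + 1))} else ∅) := by
    split_ifs <;> simp (disch := omega) only [disjoint_singleton, Fin.ext_iff,
      Fin.val_cast_of_lt, disjoint_empty_left, disjoint_empty_right, ne_eq]
    omega
  rw [degree_add_incM hF, neighborFinset_pathGraph, sum_union hdisj]
  congr 1
  · split_ifs with h
    · rw [sum_singleton, pathEdge, Nat.sub_add_cancel h, Fin.cast_val_eq_self, Sym2.eq_swap]
    · rfl
  · split_ifs
    · rw [sum_singleton, pathEdge, Fin.cast_val_eq_self]
    · rfl

theorem irregularisingM_pathGraph_iff (hn : 2 ≤ n) :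
    IrregularisingM (pathGraph (n + 1)) F ↔ (∀ e ∈ F, e ∈ (pathGraph (n + 1)).edgeSet) ∧
      ∀ j, j + 2 < n → F.count (pathEdge n j) ≠ F.count (pathEdge n (j + 2)) := by
  refine and_congr_right fun hF => ⟨fun hirr j hj => ?_, fun hx u v hadj => ?_⟩
  · have hadj : (pathGraph (n + 1)).Adj ⟨j + 1, by omega⟩ ⟨j + 2, by omega⟩ :=
      pathGraph_adj.mpr (Or.inl rfl)
    have h := hirr hadj
    simp only [degree_add_incM_pathGraph hF] at h
    grind
  · have hsucc : ∀ {u v : Fin (n + 1)}, u.val + 1 = v.val →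
        (pathGraph (n + 1)).degree u + incM F u ≠ (pathGraph (n + 1)).degree v + incM F v := by
      intro u v h
      simp only [degree_add_incM_pathGraph hF, ← h, Nat.add_sub_cancel]
      split_ifs <;> try omega
      have := hx (u.val - 1) (by omega)
      rw [show u.val - 1 + 2 = u.val + 1 by omega] at this
      omega
    rcases pathGraph_adj.mp hadj with h | h
    exacts [hsucc h, (hsucc h).symm]

theorem card_eq_sum_count_pathEdge (hF : ∀ e ∈ F, e ∈ (pathGraph (n + 1)).edgeSet) :
    Multiset.card F = ∑ j ∈ range n, F.count (pathEdge n j) := by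
  have hinj : Set.InjOn (pathEdge n) (range n) := by
    rw [coe_range]
    exact pathEdge_injOn
  have hsupp : ∀ e ∈ F, e ∈ (range n).image (pathEdge n) := by
    intro e he
    obtain ⟨j, hj, rfl⟩ := mem_edgeSet_pathGraph.mp (hF e he)
    exact mem_image_of_mem _ (mem_range.mpr hj)
  rw [← Multiset.sum_count_eq_card hsupp, sum_image hinj]

def pathMultiset (n : ℕ) (x : ℕ → ℕ) : Multiset (Sym2 (Fin (n + 1))) :=
  ∑ j ∈ range n, x j • {pathEdge n j}

theorem mem_edgeSet_of_mem_pathMultiset {x : ℕ → ℕ} {e : Sym2 (Fin (n + 1))}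
    (he : e ∈ pathMultiset n x) : e ∈ (pathGraph (n + 1)).edgeSet := by
  obtain ⟨j, hj, he⟩ := Multiset.mem_sum.mp he
  rw [Multiset.mem_singleton.mp (Multiset.mem_of_mem_nsmul he)]
  exact mem_edgeSet_pathGraph.mpr ⟨j, mem_range.mp hj, rfl⟩

theorem count_pathMultiset (x : ℕ → ℕ) {k : ℕ} (hk : k < n) :
    (pathMultiset n x).count (pathEdge n k) = x k := by
  rw [pathMultiset, Multiset.count_sum', sum_eq_single k]
  · simp
  · intro j hj hjk
    rw [Multiset.count_nsmul, Multiset.count_singleton,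
      if_neg fun h => hjk (pathEdge_injOn (mem_range.mp hj) hk h.symm), mul_zero]
  · exact fun h => absurd (mem_range.mpr hk) h

end PathGraph

section Sequences

def pathBound (n : ℕ) : ℕ :=
  if n % 4 = 0 then n / 2 else if n % 4 = 2 then n / 2 - 1 else (n - 1) / 2

theorem pathBound_add_four (n : ℕ) : pathBound (n + 4) = pathBound n + 2 := by
  unfold pathBound
  split_ifs <;> omega

theorem pathBound_le_sum {x : ℕ → ℕ} :
    ∀ {n : ℕ}, (∀ j, j + 2 < n → x j ≠ x (j + 2)) → pathBound n ≤ ∑ j ∈ range n, x j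
  | 0, _ | 1, _ | 2, _ => by simp [pathBound]
  | 3, hx => by
    have := hx 0 (by norm_num)
    norm_num [pathBound, sum_range_succ] at this ⊢
    omega
  | n + 4, hx => by
    have ih := pathBound_le_sum (n := n) fun j hj => hx j (by omega)
    have h₀ : x n ≠ x (n + 2) := hx n (by omega)
    have h₁ : x (n + 1) ≠ x (n + 3) := hx (n + 1) (by omega)
    rw [pathBound_add_four]
    simp only [sum_range_succ] at ih ⊢
    omega

theorem sum_range_mod_four_div_two : ∀ n : ℕ, ∑ j ∈ range n, j % 4 / 2 = pathBound n
  | 0 | 1 | 2 | 3 => by decide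
  | n + 4 => by
    rw [pathBound_add_four, ← sum_range_mod_four_div_two n]
    simp only [sum_range_succ]
    omega

end Sequences

/-- for `n ≥ 2`, the minimum cardinality `φ(P_n)` of an irregularising
multiset of edges of the path `P_n` (with `n+1` vertices) is: `n/2` if `n ≡ 0 (mod 4)`,
`n/2 - 1` if `n ≡ 2 (mod 4)`, and `(n-1)/2` if `n` is odd. -/
theorem stmt_17 (n : ℕ) (hn : 2 ≤ n) :
    IsLeast {c : ℕ | ∃ F : Multiset (Sym2 (Fin (n + 1))),
        IrregularisingM (pathGraph (n + 1)) F ∧ Multiset.card F = c}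
      (if n % 4 = 0 then n / 2 else if n % 4 = 2 then n / 2 - 1 else (n - 1) / 2) := by
  change IsLeast _ (pathBound n)
  refine ⟨⟨pathMultiset n (· % 4 / 2), ?_, ?_⟩, ?_⟩
  · refine (irregularisingM_pathGraph_iff hn).mpr
      ⟨fun e => mem_edgeSet_of_mem_pathMultiset, fun j hj => ?_⟩
    rw [count_pathMultiset _ (by omega), count_pathMultiset _ hj]
    omega
  · rw [card_eq_sum_count_pathEdge fun e => mem_edgeSet_of_mem_pathMultiset,
      ← sum_range_mod_four_div_two]
    exact sum_congr rfl fun j hj => count_pathMultiset _ (mem_range.mp hj)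
  · rintro _ ⟨F, hF, rfl⟩
    obtain ⟨hE, hx⟩ := (irregularisingM_pathGraph_iff hn).mp hF
    rw [card_eq_sum_count_pathEdge hE]
    exact pathBound_le_sum hx
end

section
/- For every n ≥ 2, ML^W(P_n) equals: 0 if n = 2; 1 if n = 3; 2 if n ∈ {4, 5}; and 2n − 10 if n ≥ 6. That is, the path P_n admits an irregularising walk of that length, and every irregularising walk of P_n has at least that length. -/
/-!
Let `m i` be the number of times a walk `W` of `P_n` traverses the edge `u_i u_{i+1}`
(and `m i = 0` for `i ≥ n`). The degree of `u_{k+1}` in `P_n + W` is `m k + m (k + 1) + 2`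
(one less at the end vertices), so `W` is irregularising iff `m i ≠ m (i + 2)` whenever
`i + 2 < n`.

Lower bound: `inc_W(u)` is odd only at the ends of `W`, so the sequence `0, m 0, …, m n` changes
parity at most twice. Peeling off short prefixes shows that any sequence with
`m i ≠ m (i + 2)` satisfies `∑ m i + 2 #{i | m i = 0} + #(parity changes) ≥ 2n`: a term costs
less than `2` only inside a run of `1`s, and such a run is paid for by the `3`s forced around it
or by a parity change. Since `W` is connected, its untraversed edges form a prefix and a suffix
of length at most `2` each, whence `‖W‖ ≥ 2n - 10`.

Upper bound: for `n ≥ 6` the multiplicities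
`0, 0, 2^r₁, 1, 1, 3, 3, 1, 1, …, 3, 3, 1, 1, 2^r₂, 0, 0` (`r₁, r₂ ≤ 2`) sum to `2n - 10`
and satisfy `m i ≠ m (i + 2)`; they are realised by a walk that makes an excursion over the
left block of `2`s, climbs the middle part (shuttling back and forth on the edges of
multiplicity `3`), and ends with an excursion over the right block of `2`s.
-/

open SimpleGraph Finset

variable {V : Type*}

namespace SimpleGraph.Walk

variable [DecidableEq V] {G : SimpleGraph V} {a b : V}

theorem inc_eq_sum_count_s18 [Fintype V] [DecidableRel G.Adj] (W : G.Walk a b) (u : V) :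
    W.inc u = ∑ e ∈ G.incidenceFinset u, W.edges.count e := by
  have hsub : ∀ e ∈ (W.edges.filter (u ∈ ·) : Multiset (Sym2 V)), e ∈ G.incidenceFinset u := by
    intro e he
    simp only [Multiset.mem_coe, List.mem_filter, decide_eq_true_eq] at he
    simpa [incidenceSet] using ⟨W.edges_subset_edgeSet he.1, he.2⟩
  rw [inc, ← Multiset.coe_card, ← Multiset.sum_count_eq_card hsub]
  refine sum_congr rfl fun e he => ?_
  rw [Multiset.coe_count, List.count_filter]
  simpa [incidenceSet] using ((G.mem_incidenceFinset u e).1 he).2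

theorem length_eq_sum_count [Fintype V] [DecidableRel G.Adj] (W : G.Walk a b) :
    W.length = ∑ e ∈ G.edgeFinset, W.edges.count e := by
  have hsub : ∀ e ∈ (W.edges : Multiset (Sym2 V)), e ∈ G.edgeFinset :=
    fun e he => mem_edgeFinset.2 (W.edges_subset_edgeSet he)
  rw [← length_edges, ← Multiset.coe_card, ← Multiset.sum_count_eq_card hsub]
  simp only [Multiset.coe_count]

theorem inc_mod_two (W : G.Walk a b) (u : V) :
    W.inc u % 2 = ((if u = a then 1 else 0) + (if u = b then 1 else 0)) % 2 := by
  induction W with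
  | nil => simp only [inc, edges_nil, List.filter_nil, List.length_nil]; split_ifs <;> rfl
  | @cons x y z h W ih =>
    have hxy := h.ne
    simp only [inc, edges_cons, List.filter_cons, Sym2.mem_iff, decide_eq_true_eq] at ih ⊢
    by_cases hx : u = x <;> by_cases hy : u = y <;> simp_all <;> omega

theorem sum_inc_mod_two_le [Fintype V] (W : G.Walk a b) : ∑ u, W.inc u % 2 ≤ 2 :=
  calc ∑ u, W.inc u % 2
      ≤ ∑ u, ((if u = a then 1 else 0) + (if u = b then 1 else 0)) :=
        sum_le_sum fun u _ => (W.inc_mod_two u).trans_le (Nat.mod_le _ _)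
    _ = 2 := by simp [sum_add_distrib]

theorem exists_mem_edges_of_mem_support (W : G.Walk a b) (S : Set V) {x y : V}
    (hx : x ∈ W.support) (hy : y ∈ W.support) (hxS : x ∈ S) (hyS : y ∉ S) :
    ∃ u ∈ S, ∃ v ∉ S, s(u, v) ∈ W.edges := by
  by_cases ha : a ∈ S
  · obtain ⟨d, hd, h₁, h₂⟩ := (W.takeUntil y hy).exists_boundary_dart S ha hyS
    exact ⟨d.fst, h₁, d.snd, h₂,
      W.edges_takeUntil_subset_edges hy (List.mem_map_of_mem (f := Dart.edge) hd)⟩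
  · obtain ⟨d, hd, h₁, h₂⟩ := (W.takeUntil x hx).exists_boundary_dart Sᶜ ha (by simpa)
    refine ⟨d.snd, by simpa using h₂, d.fst, h₁, ?_⟩
    rw [Sym2.eq_swap]
    exact W.edges_takeUntil_subset_edges hx (List.mem_map_of_mem (f := Dart.edge) hd)

end SimpleGraph.Walk

/-- The number of parity changes along `0, m 0, m 1, …, m L`. -/
def parityChanges (m : ℕ → ℕ) (L : ℕ) : ℕ := m 0 % 2 + ∑ i ∈ range L, (m i + m (i + 1)) % 2

theorem parityChanges_add (m : ℕ → ℕ) (k l : ℕ) :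
    parityChanges m (k + l) + m k % 2 =
      parityChanges m k + parityChanges (fun i => m (k + i)) l := by
  simp only [parityChanges, sum_range_add, add_zero, ← Nat.add_assoc]
  omega

theorem exists_prefix_two_mul_le (m : ℕ → ℕ) {L : ℕ} (hL : m L = 0)
    (hm : ∀ i, i + 2 < L → m i ≠ m (i + 2)) (hL₀ : 0 < L) :
    ∃ k, 0 < k ∧ k ≤ L ∧ 2 * k + m k % 2 ≤
      ∑ i ∈ range k, m i + 2 * #{i ∈ range k | m i = 0} + parityChanges m k := by
  have hlt : ∀ i, i ≤ L → m i ≠ 0 → i < L := fun i hi h =>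
    lt_of_le_of_ne hi fun h' => h (h' ▸ hL)
  simp only [card_filter, parityChanges]
  by_cases h₀ : m 0 = 1
  swap
  · refine ⟨1, by omega, hL₀, ?_⟩
    simp only [sum_range_one, zero_add]; split_ifs <;> omega
  by_cases h₁ : m 1 % 2 = 0
  · refine ⟨1, by omega, hL₀, ?_⟩
    simp only [sum_range_one, zero_add]; split_ifs <;> omega
  have h₁L := hlt 1 hL₀ (by omega)
  by_cases h₁' : m 1 = 1
  swap
  · refine ⟨2, by omega, h₁L, ?_⟩
    simp only [sum_range_succ, sum_range_zero, Nat.reduceAdd]; split_ifs <;> omega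
  have h₂ : m 2 ≠ 1 := by
    rcases Nat.lt_or_ge 2 L with h | h
    · exact h₀ ▸ (hm 0 h).symm
    · obtain rfl : L = 2 := by omega
      omega
  by_cases h₂' : m 2 % 2 = 0
  · refine ⟨2, by omega, h₁L, ?_⟩
    simp only [sum_range_succ, sum_range_zero, Nat.reduceAdd]; split_ifs <;> omega
  have h₂L := hlt 2 h₁L (by omega)
  by_cases h₃ : m 3 % 2 = 0
  · refine ⟨3, by omega, h₂L, ?_⟩
    simp only [sum_range_succ, sum_range_zero, Nat.reduceAdd]; split_ifs <;> omega
  have h₃L := hlt 3 h₂L (by omega)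
  have h₃' : m 1 ≠ m 3 := hm 1 h₃L
  refine ⟨4, by omega, h₃L, ?_⟩
  simp only [sum_range_succ, sum_range_zero, Nat.reduceAdd]; split_ifs <;> omega

theorem two_mul_le_sum_add_parityChanges (L : ℕ) (m : ℕ → ℕ) (hL : m L = 0)
    (hm : ∀ i, i + 2 < L → m i ≠ m (i + 2)) :
    2 * L ≤ ∑ i ∈ range L, m i + 2 * #{i ∈ range L | m i = 0} + parityChanges m L := by
  induction L using Nat.strong_induction_on generalizing m with | _ L ih => ?_
  rcases L.eq_zero_or_pos with rfl | hL₀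
  · simp
  obtain ⟨k, hk₀, hkL, hk⟩ := exists_prefix_two_mul_le m hL hm hL₀
  obtain ⟨l, rfl⟩ : ∃ l, L = k + l := ⟨L - k, by omega⟩
  have hrest := ih l (by omega) (fun i => m (k + i)) hL fun i hi => by
    simpa only [Nat.add_assoc] using hm (k + i) (by omega)
  have hsplit := parityChanges_add m k l
  simp only [card_filter, sum_range_add] at hk hrest ⊢
  omega

theorem sum_range_two_mul_div_two_mod_two_add_one (j : ℕ) :
    ∑ i ∈ range (4 * j + 2), (2 * (i / 2 % 2) + 1) = 8 * j + 2 := by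
  induction j with
  | zero => rfl
  | succ j ih =>
    rw [show 4 * (j + 1) + 2 = 4 * j + 2 + 1 + 1 + 1 + 1 by ring]
    simp only [sum_range_succ, ih]
    omega

theorem Fin.clamp_val {n : ℕ} (u : Fin (n + 1)) : Fin.clamp u n = u :=
  Fin.ext (by simp [Nat.le_of_lt_succ u.2])

namespace SimpleGraph.pathGraph

variable {n : ℕ}

/-- For `n ≤ i` this is the diagonal `s(n, n)`, which no walk traverses. -/
def edge (n i : ℕ) : Sym2 (Fin (n + 1)) := s(Fin.clamp i n, Fin.clamp (i + 1) n)

theorem adj_clamp {i : ℕ} (h : i < n) :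
    (pathGraph (n + 1)).Adj (Fin.clamp i n) (Fin.clamp (i + 1) n) := by
  simp only [pathGraph_adj, Fin.coe_clamp]; omega

theorem edge_eq_edge_iff {i j : ℕ} (h : i < n) : edge n j = edge n i ↔ j = i := by
  simp only [edge, Sym2.eq_iff, Fin.ext_iff, Fin.coe_clamp]; omega

theorem edgeFinset_eq : (pathGraph (n + 1)).edgeFinset = (range n).image (edge n) := by
  ext e; induction e using Sym2.ind with | _ x y => ?_
  simp only [mem_edgeFinset, mem_edgeSet, pathGraph_adj, mem_image, mem_range, edge,
    Sym2.eq_iff, Fin.ext_iff, Fin.coe_clamp]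
  constructor
  · rintro (h | h)
    · exact ⟨x, by omega, by omega⟩
    · exact ⟨y, by omega, by omega⟩
  · rintro ⟨i, hi, h⟩; omega

theorem incidenceFinset_clamp_zero (hn : 0 < n) :
    (pathGraph (n + 1)).incidenceFinset (Fin.clamp 0 n) = {edge n 0} := by
  ext e; induction e using Sym2.ind with | _ x y => ?_
  simp only [mem_incidenceFinset, incidenceSet, edge, Sym2.eq_iff, Fin.ext_iff, pathGraph_adj,
    mem_singleton, Set.mem_ofPred_eq, mem_edgeSet, Sym2.mem_iff, Fin.coe_clamp]
  omega

theorem incidenceFinset_clamp_succ {k : ℕ} (hk : k + 1 < n) :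
    (pathGraph (n + 1)).incidenceFinset (Fin.clamp (k + 1) n) = {edge n k, edge n (k + 1)} := by
  ext e; induction e using Sym2.ind with | _ x y => ?_
  simp only [mem_incidenceFinset, incidenceSet, edge, Sym2.eq_iff, Fin.ext_iff, pathGraph_adj,
    mem_insert, mem_singleton, Set.mem_ofPred_eq, mem_edgeSet, Sym2.mem_iff, Fin.coe_clamp]
  omega

theorem incidenceFinset_clamp_self (hn : 0 < n) :
    (pathGraph (n + 1)).incidenceFinset (Fin.clamp n n) = {edge n (n - 1)} := by
  ext e; induction e using Sym2.ind with | _ x y => ?_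
  simp only [mem_incidenceFinset, incidenceSet, edge, Sym2.eq_iff, Fin.ext_iff, pathGraph_adj,
    mem_singleton, Set.mem_ofPred_eq, mem_edgeSet, Sym2.mem_iff, Fin.coe_clamp]
  omega

theorem degree_clamp_zero (hn : 0 < n) : (pathGraph (n + 1)).degree (Fin.clamp 0 n) = 1 := by
  rw [← card_incidenceFinset_eq_degree, incidenceFinset_clamp_zero hn, card_singleton]

theorem degree_clamp_succ {k : ℕ} (hk : k + 1 < n) :
    (pathGraph (n + 1)).degree (Fin.clamp (k + 1) n) = 2 := by
  rw [← card_incidenceFinset_eq_degree, incidenceFinset_clamp_succ hk,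
    card_pair (by rw [Ne, edge_eq_edge_iff hk]; omega)]

theorem degree_clamp_self (hn : 0 < n) : (pathGraph (n + 1)).degree (Fin.clamp n n) = 1 := by
  rw [← card_incidenceFinset_eq_degree, incidenceFinset_clamp_self hn, card_singleton]

theorem forall_adj_ne_iff {α : Type*} (f : Fin (n + 1) → α) :
    (∀ ⦃u v⦄, (pathGraph (n + 1)).Adj u v → f u ≠ f v) ↔
      ∀ k < n, f (Fin.clamp k n) ≠ f (Fin.clamp (k + 1) n) := by
  refine ⟨fun h k hk => h (adj_clamp hk), fun h u v huv => ?_⟩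
  have hsucc {x y : Fin (n + 1)} (hxy : x.val + 1 = y.val) : Fin.clamp (x + 1) n = y :=
    Fin.ext (by simp only [Fin.coe_clamp]; omega)
  rcases pathGraph_adj.1 huv with huv | huv
  · simpa only [Fin.clamp_val, hsucc huv] using h u (by omega)
  · simpa only [Fin.clamp_val, hsucc huv] using (h v (by omega)).symm

variable {a b c : Fin (n + 1)}

def edgeMult (W : (pathGraph (n + 1)).Walk a b) (i : ℕ) : ℕ := W.edges.count (edge n i)

@[simp]
theorem edgeMult_nil (i : ℕ) : edgeMult (Walk.nil : (pathGraph (n + 1)).Walk a a) i = 0 := rfl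

@[simp]
theorem edgeMult_append (W : (pathGraph (n + 1)).Walk a b) (W' : (pathGraph (n + 1)).Walk b c)
    (i : ℕ) : edgeMult (W.append W') i = edgeMult W i + edgeMult W' i := by
  simp only [edgeMult, Walk.edges_append, List.count_append]

@[simp]
theorem edgeMult_reverse (W : (pathGraph (n + 1)).Walk a b) (i : ℕ) :
    edgeMult W.reverse i = edgeMult W i := by
  simp only [edgeMult, Walk.edges_reverse, List.count_reverse]

theorem edgeMult_eq_zero (W : (pathGraph (n + 1)).Walk a b) {i : ℕ} (hi : n ≤ i) :
    edgeMult W i = 0 := by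
  refine List.count_eq_zero.2 fun he => (pathGraph (n + 1)).not_isDiag_of_mem_edgeSet
    (W.edges_subset_edgeSet he) ?_
  simp only [edge, Sym2.mk_isDiag_iff, Fin.ext_iff, Fin.coe_clamp]; omega

theorem length_eq_sum_edgeMult (W : (pathGraph (n + 1)).Walk a b) :
    W.length = ∑ i ∈ range n, edgeMult W i := by
  rw [W.length_eq_sum_count, edgeFinset_eq, sum_image]
  · rfl
  · intro i hi j _ h
    exact ((edge_eq_edge_iff (mem_range.1 hi)).1 h.symm).symm

theorem inc_clamp_zero (hn : 0 < n) (W : (pathGraph (n + 1)).Walk a b) :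
    W.inc (Fin.clamp 0 n) = edgeMult W 0 := by
  rw [W.inc_eq_sum_count_s18, incidenceFinset_clamp_zero hn, sum_singleton, edgeMult]

theorem inc_clamp_succ {k : ℕ} (hk : k < n) (W : (pathGraph (n + 1)).Walk a b) :
    W.inc (Fin.clamp (k + 1) n) = edgeMult W k + edgeMult W (k + 1) := by
  rw [W.inc_eq_sum_count_s18]
  rcases Nat.lt_or_ge (k + 1) n with h | h
  · rw [incidenceFinset_clamp_succ h, sum_pair (by rw [Ne, edge_eq_edge_iff h]; omega)]
    rfl
  · obtain rfl : n = k + 1 := by omega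
    rw [incidenceFinset_clamp_self (by omega), sum_singleton, edgeMult_eq_zero W le_rfl]
    rfl

theorem degree_add_inc_clamp_zero (hn : 0 < n) (W : (pathGraph (n + 1)).Walk a b) :
    (pathGraph (n + 1)).degree (Fin.clamp 0 n) + W.inc (Fin.clamp 0 n) = edgeMult W 0 + 1 := by
  rw [degree_clamp_zero hn, inc_clamp_zero hn, add_comm]

theorem degree_add_inc_clamp_succ {k : ℕ} (hk : k < n) (W : (pathGraph (n + 1)).Walk a b) :
    (pathGraph (n + 1)).degree (Fin.clamp (k + 1) n) + W.inc (Fin.clamp (k + 1) n) =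
      edgeMult W k + edgeMult W (k + 1) + if k + 1 < n then 2 else 1 := by
  rw [inc_clamp_succ hk, add_comm]
  split_ifs with h
  · rw [degree_clamp_succ h]
  · obtain rfl : n = k + 1 := by omega
    rw [degree_clamp_self (by omega)]

theorem irregularising_iff (hn : 2 ≤ n) (W : (pathGraph (n + 1)).Walk a b) :
    W.Irregularising ↔ ∀ i, i + 2 < n → edgeMult W i ≠ edgeMult W (i + 2) := by
  rw [Walk.Irregularising, forall_adj_ne_iff
    (fun u => (pathGraph (n + 1)).degree u + W.inc u)]
  constructor
  · intro h i hi
    have := h (i + 1) (by omega)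
    rw [degree_add_inc_clamp_succ (by omega), degree_add_inc_clamp_succ (by omega),
      if_pos (by omega), if_pos (by omega)] at this
    simp only [Nat.add_assoc, Nat.reduceAdd] at this
    omega
  · rintro h (_ | k) hk
    · rw [degree_add_inc_clamp_zero (by omega), degree_add_inc_clamp_succ hk, if_pos (by omega)]
      omega
    · rw [degree_add_inc_clamp_succ (by omega), degree_add_inc_clamp_succ hk, if_pos (by omega)]
      simp only [Nat.add_assoc, Nat.reduceAdd]
      rcases Nat.lt_or_ge (k + 2) n with h₂ | h₂
      · rw [if_pos h₂]
        have := h k h₂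
        omega
      · rw [if_neg (by omega), edgeMult_eq_zero W h₂]
        omega

theorem edgeMult_pos_of_le_of_le (W : (pathGraph (n + 1)).Walk a b) {i j l : ℕ}
    (hi : 0 < edgeMult W i) (hj : 0 < edgeMult W j) (hil : i ≤ l) (hlj : l ≤ j) :
    0 < edgeMult W l := by
  have hjn : j < n := Nat.lt_of_not_ge fun h => hj.ne' (edgeMult_eq_zero W h)
  have hmem : ∀ {t}, 0 < edgeMult W t → edge n t ∈ W.edges := List.count_pos_iff.1
  obtain ⟨u, hu, v, hv, huv⟩ := W.exists_mem_edges_of_mem_support {w | w.val ≤ l}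
    (W.fst_mem_support_of_mem_edges (hmem hi)) (W.snd_mem_support_of_mem_edges (hmem hj))
    (by simp only [Set.mem_ofPred_eq, Fin.coe_clamp]; omega)
    (by simp only [Set.mem_ofPred_eq, Fin.coe_clamp]; omega)
  have hadj := pathGraph_adj.1 ((mem_edgeSet _).1 (W.edges_subset_edgeSet huv))
  simp only [Set.mem_ofPred_eq, not_le] at hu hv
  obtain rfl : u = Fin.clamp l n := Fin.ext (by simp only [Fin.coe_clamp]; omega)
  obtain rfl : v = Fin.clamp (l + 1) n := Fin.ext (by simp only [Fin.coe_clamp]; omega)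
  exact List.count_pos_iff.2 huv

theorem parityChanges_edgeMult_le (hn : 0 < n) (W : (pathGraph (n + 1)).Walk a b) :
    parityChanges (edgeMult W) n ≤ 2 :=
  calc parityChanges (edgeMult W) n = ∑ k ∈ range (n + 1), W.inc (Fin.clamp k n) % 2 := by
        rw [sum_range_succ', inc_clamp_zero hn, parityChanges, add_comm]
        congr 1
        exact sum_congr rfl fun k hk => by rw [inc_clamp_succ (mem_range.1 hk)]
    _ = ∑ u, W.inc u % 2 := by
        rw [← Fin.sum_univ_eq_sum_range]; simp only [Fin.clamp_val]
    _ ≤ 2 := W.sum_inc_mod_two_le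

theorem card_filter_edgeMult_eq_zero_le (hn : 6 ≤ n) (W : (pathGraph (n + 1)).Walk a b)
    (hW : W.Irregularising) : #{i ∈ range n | edgeMult W i = 0} ≤ 4 := by
  have hm := (irregularising_iff (by omega) W).1 hW
  have hpos : ∀ t, t + 2 < n → ∃ i, t ≤ i ∧ i ≤ t + 2 ∧ 0 < edgeMult W i := fun t ht => by
    by_cases h : edgeMult W t = 0
    · exact ⟨t + 2, by omega, le_rfl, by have := hm t ht; omega⟩
    · exact ⟨t, le_rfl, by omega, by omega⟩
  have hmid : ∀ l, 3 ≤ l → l + 3 < n → edgeMult W l ≠ 0 := fun l h₃ hl => by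
    obtain ⟨i, -, hi, hi'⟩ := hpos 0 (by omega)
    obtain ⟨j, hj, -, hj'⟩ := hpos (n - 3) (by omega)
    exact (edgeMult_pos_of_le_of_le W hi' hj' (by omega) (by omega)).ne'
  have hsub : {i ∈ range n | edgeMult W i = 0} ⊆
      {i ∈ range 3 | edgeMult W i = 0} ∪ {i ∈ Ico (n - 3) n | edgeMult W i = 0} := by
    intro i
    simp only [mem_union, mem_filter, mem_range, mem_Ico]
    intro ⟨hi, h⟩
    by_contra! h'
    exact hmid i (by omega) (by omega) h
  have hlow : #{i ∈ range 3 | edgeMult W i = 0} < 3 := by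
    obtain ⟨i, -, hi, hi'⟩ := hpos 0 (by omega)
    refine (card_lt_card (filter_ssubset.2 ⟨i, mem_range.2 (by omega), hi'.ne'⟩)).trans_eq ?_
    exact card_range 3
  have hhigh : #{i ∈ Ico (n - 3) n | edgeMult W i = 0} < 3 := by
    obtain ⟨j, hj, hj₂, hj'⟩ := hpos (n - 3) (by omega)
    refine (card_lt_card (filter_ssubset.2 ⟨j, mem_Ico.2 ⟨hj, by omega⟩, hj'.ne'⟩)).trans_eq ?_
    rw [Nat.card_Ico]; omega
  have := (card_le_card hsub).trans (card_union_le _ _)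
  omega

theorem two_mul_sub_ten_le_length (hn : 6 ≤ n) (W : (pathGraph (n + 1)).Walk a b)
    (hW : W.Irregularising) : 2 * n - 10 ≤ W.length := by
  have key := two_mul_le_sum_add_parityChanges n (edgeMult W) (edgeMult_eq_zero W le_rfl)
    ((irregularising_iff (by omega) W).1 hW)
  have hzero := card_filter_edgeMult_eq_zero_le hn W hW
  have hpar := parityChanges_edgeMult_le (by omega) W
  rw [← length_eq_sum_edgeMult] at key
  omega

theorem one_le_length (hn : 3 ≤ n) (W : (pathGraph (n + 1)).Walk a b)
    (hW : W.Irregularising) : 1 ≤ W.length := by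
  have h₀ : edgeMult W 0 ≠ edgeMult W 2 := (irregularising_iff (by omega) W).1 hW 0 (by omega)
  rw [length_eq_sum_edgeMult]
  refine le_trans ?_ (sum_le_sum_of_subset (range_subset_range.2 hn))
  simp only [sum_range_succ, sum_range_zero]
  omega

theorem two_le_length (hn : 4 ≤ n) (W : (pathGraph (n + 1)).Walk a b)
    (hW : W.Irregularising) : 2 ≤ W.length := by
  have h₀ : edgeMult W 0 ≠ edgeMult W 2 := (irregularising_iff (by omega) W).1 hW 0 (by omega)
  have h₁ : edgeMult W 1 ≠ edgeMult W 3 := (irregularising_iff (by omega) W).1 hW 1 (by omega)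
  rw [length_eq_sum_edgeMult]
  refine le_trans ?_ (sum_le_sum_of_subset (range_subset_range.2 hn))
  simp only [sum_range_succ, sum_range_zero]
  omega

def stepUp {i : ℕ} (h : i < n) :
    (pathGraph (n + 1)).Walk (Fin.clamp i n) (Fin.clamp (i + 1) n) :=
  .cons (adj_clamp h) .nil

def shuttle {i : ℕ} (h : i < n) :
    ℕ → (pathGraph (n + 1)).Walk (Fin.clamp i n) (Fin.clamp (i + 1) n)
  | 0 => stepUp h
  | t + 1 => (stepUp h).append ((stepUp h).reverse.append (shuttle h t))

def climb (k : ℕ → ℕ) (s : ℕ) :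
    (r : ℕ) → s + r ≤ n → (pathGraph (n + 1)).Walk (Fin.clamp s n) (Fin.clamp (s + r) n)
  | 0, _ => .nil
  | r + 1, h => (climb k s r (by omega)).append (shuttle (i := s + r) (by omega) (k (s + r)))

theorem edgeMult_stepUp {i j : ℕ} (h : j < n) :
    edgeMult (stepUp h) i = if i = j then 1 else 0 := by
  simp only [edgeMult, stepUp, Walk.edges_cons, Walk.edges_nil, List.count_singleton, beq_iff_eq]
  change (if edge n j = edge n i then 1 else 0) = _
  simp only [@eq_comm _ (edge n j), edge_eq_edge_iff h]

theorem edgeMult_shuttle {i j : ℕ} (h : j < n) (t : ℕ) :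
    edgeMult (shuttle h t) i = if i = j then 2 * t + 1 else 0 := by
  induction t with
  | zero => exact edgeMult_stepUp h
  | succ t ih =>
    simp only [shuttle, edgeMult_append, edgeMult_reverse, edgeMult_stepUp, ih]
    split_ifs <;> omega

theorem length_shuttle {j : ℕ} (h : j < n) (t : ℕ) : (shuttle h t).length = 2 * t + 1 := by
  induction t with
  | zero => rfl
  | succ t ih =>
    simp only [shuttle, stepUp, Walk.length_append, Walk.length_reverse, Walk.length_cons,
      Walk.length_nil, ih]
    omega

theorem edgeMult_climb (k : ℕ → ℕ) (s r : ℕ) (h : s + r ≤ n) (i : ℕ) :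
    edgeMult (climb k s r h) i = if s ≤ i ∧ i < s + r then 2 * k i + 1 else 0 := by
  induction r with
  | zero => simp [climb]
  | succ r ih =>
    simp only [climb, edgeMult_append, edgeMult_shuttle, ih]
    split_ifs <;> subst_vars <;> omega

theorem length_climb (k : ℕ → ℕ) (s r : ℕ) (h : s + r ≤ n) :
    (climb k s r h).length = ∑ i ∈ range r, (2 * k (s + i) + 1) := by
  induction r with
  | zero => rfl
  | succ r ih => simp only [climb, Walk.length_append, length_shuttle, ih, sum_range_succ]

/- The edge multiplicities are `0^z 2^r₁ (1 1 3 3)^j 1 1 2^r₂ 0^z'`. -/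
theorem exists_irregularising_length_eq {z r₁ j r₂ z' : ℕ} (hz : z ≤ 2) (h₁ : r₁ ≤ 2)
    (h₂ : r₂ ≤ 2) (hz' : z' ≤ 2) (hn : n = z + r₁ + (4 * j + 2) + r₂ + z') :
    ∃ (a b : Fin (n + 1)) (W : (pathGraph (n + 1)).Walk a b),
      W.Irregularising ∧ W.length = 2 * (n - z - z') - 2 := by
  let P := climb 0 z r₁ (n := n) (by omega)
  let C := climb (fun i => (i - (z + r₁)) / 2 % 2) (z + r₁) (4 * j + 2) (n := n) (by omega)
  let Q := climb 0 (z + r₁ + (4 * j + 2)) r₂ (n := n) (by omega)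
  refine ⟨_, _, P.reverse.append (P.append (C.append (Q.append Q.reverse))), ?_, ?_⟩
  · rw [irregularising_iff (by omega)]
    intro i hi
    simp only [P, C, Q, edgeMult_append, edgeMult_reverse, edgeMult_climb, Pi.zero_apply]
    split_ifs <;> omega
  · simp only [P, C, Q, Walk.length_append, Walk.length_reverse, length_climb, Pi.zero_apply,
      Nat.add_sub_cancel_left, sum_range_two_mul_div_two_mod_two_add_one, mul_zero, zero_add,
      sum_const, card_range, smul_eq_mul, mul_one]
    omega

def minIrregularisingLength (n : ℕ) : ℕ :=
  if n = 2 then 0 else if n = 3 then 1 else if n ≤ 5 then 2 else 2 * n - 10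

theorem exists_irregularising_length_eq_min (hn : 2 ≤ n) :
    ∃ (a b : Fin (n + 1)) (W : (pathGraph (n + 1)).Walk a b),
      W.Irregularising ∧ W.length = minIrregularisingLength n := by
  rcases (show n = 2 ∨ n = 3 ∨ n = 4 ∨ n = 5 ∨ 6 ≤ n by omega) with rfl | rfl | rfl | rfl | hn
  · exact ⟨0, 0, .nil, (irregularising_iff le_rfl _).2 fun i hi => absurd hi (by omega), rfl⟩
  · refine ⟨_, _, stepUp (n := 3) (i := 0) (by norm_num),
      (irregularising_iff (by norm_num) _).2 fun i hi => ?_, rfl⟩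
    obtain rfl : i = 0 := by omega
    simp [edgeMult_stepUp]
  · exact exists_irregularising_length_eq (z := 0) (r₁ := 0) (j := 0) (r₂ := 0) (z' := 2)
      (by norm_num) (by norm_num) (by norm_num) (by norm_num) (by norm_num)
  · exact exists_irregularising_length_eq (z := 2) (r₁ := 0) (j := 0) (r₂ := 0) (z' := 1)
      (by norm_num) (by norm_num) (by norm_num) (by norm_num) (by norm_num)
  · obtain ⟨a, b, W, hW, hlen⟩ := exists_irregularising_length_eq (n := n) (z := 2) (z' := 2)
      (r₁ := ((n - 6) % 4 + 1) / 2) (j := (n - 6) / 4) (r₂ := (n - 6) % 4 / 2)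
      le_rfl (by omega) (by omega) le_rfl (by omega)
    refine ⟨a, b, W, hW, ?_⟩
    rw [hlen, minIrregularisingLength]
    split_ifs <;> omega

theorem minIrregularisingLength_le_length (hn : 2 ≤ n) (W : (pathGraph (n + 1)).Walk a b)
    (hW : W.Irregularising) : minIrregularisingLength n ≤ W.length := by
  rw [minIrregularisingLength]
  split_ifs with h₂ h₃ h₅
  · exact Nat.zero_le _
  · exact one_le_length (by omega) W hW
  · exact two_le_length (by omega) W hW
  · exact two_mul_sub_ten_le_length (by omega) W hW

end SimpleGraph.pathGraph

open SimpleGraph.pathGraph in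
/-- for `n ≥ 2`, `ML^W(P_n)` (the path with `n+1` vertices) equals `0` if
`n = 2`, `1` if `n = 3`, `2` if `n ∈ {4,5}`, and `2n - 10` if `n ≥ 6`. -/
theorem stmt_18 (n : ℕ) (hn : 2 ≤ n) :
    (∃ (a b : Fin (n + 1)) (W : (pathGraph (n + 1)).Walk a b),
        W.Irregularising ∧
          W.length = (if n = 2 then 0 else if n = 3 then 1 else if n ≤ 5 then 2
            else 2 * n - 10)) ∧
      (∀ (a b : Fin (n + 1)) (W : (pathGraph (n + 1)).Walk a b), W.Irregularising →
        (if n = 2 then 0 else if n = 3 then 1 else if n ≤ 5 then 2 else 2 * n - 10)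
          ≤ W.length) :=
  ⟨exists_irregularising_length_eq_min hn, fun _ _ => minIrregularisingLength_le_length hn⟩
end
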